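/- Let F be a finite field with q elements and let C ⊆ (Fin N → F) be a linear code of dimension K ≥ 1 whose minimum distance equals D, and suppose C is maximum distance separable, i.e., K + D = N + 1. Then the number of codewords of C of Hamming weight exactly D equals binomial(N, K−1) · (q − 1). -/

import Mathlib

/-!
For a `D`-set `S` of coordinates, the codewords supported in `S` form the subspace
`C ⊓ vanishingOff F S`. By the dimension formula for `C ⊔ vanishingOff F S ≤ F^N` its dimension
is at least `K + D - N = 1`, and it is at most `1` because a nonzero codeword vanishing at a point
of `S` would have weight below `D`. So it is a line, whose `q - 1` nonzero vectors are exactly the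
codewords with support `S`; summing over the `binomial(N, D) = binomial(N, K - 1)` sets `S`
gives the count.
-/

/-- The minimum distance of a linear code `C`: the least Hamming weight of a
nonzero codeword of `C`. -/
noncomputable def minDist {N : ℕ} {F : Type*} [Field F] [Fintype F] [DecidableEq F]
    (C : Submodule F (Fin N → F)) : ℕ :=
  sInf {w : ℕ | ∃ c ∈ C, c ≠ 0 ∧ hammingNorm c = w}

/-- `A_w(C)`: the number of codewords of `C` of Hamming weight exactly `w`. -/
noncomputable def weightCount {N : ℕ} {F : Type*} [Field F] [Fintype F] [DecidableEq F]
    (C : Submodule F (Fin N → F)) (w : ℕ) : ℕ :=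
  {c : Fin N → F | c ∈ C ∧ hammingNorm c = w}.ncard

open Finset Module

section HammingSupport

variable {ι F : Type*} [Fintype ι] [Zero F] [DecidableEq F]

def hammingSupport (c : ι → F) : Finset ι := {i | c i ≠ 0}

theorem hammingNorm_eq_card_hammingSupport (c : ι → F) :
    hammingNorm c = #(hammingSupport c) := rfl

theorem mem_hammingSupport {c : ι → F} {i : ι} : i ∈ hammingSupport c ↔ c i ≠ 0 := by
  simp [hammingSupport]

end HammingSupport

section CoordinateSubspace

variable {ι F : Type*} [Fintype ι] [DecidableEq ι] [Field F]

variable (F) in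
def vanishingOff (S : Finset ι) : Submodule F (ι → F) :=
  LinearMap.ker (LinearMap.funLeft F F (Subtype.val : {i // i ∉ S} → ι))

variable (F) in
theorem finrank_vanishingOff (S : Finset ι) : finrank F (vanishingOff F S) = #S := by
  have hsurj := LinearMap.funLeft_surjective_of_injective F F _ Subtype.val_injective
    (m := {i // i ∉ S})
  have hrank := LinearMap.finrank_range_add_finrank_ker
    (LinearMap.funLeft F F (Subtype.val : {i // i ∉ S} → ι))
  rw [LinearMap.range_eq_top.mpr hsurj, finrank_top, finrank_fintype_fun_eq_card,
    finrank_fintype_fun_eq_card, Fintype.card_subtype_compl, Fintype.card_coe] at hrank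
  have hS := S.card_le_univ
  unfold vanishingOff
  omega

theorem finrank_add_card_le_finrank_inf_vanishingOff (C : Submodule F (ι → F))
    (S : Finset ι) :
    finrank F C + #S ≤ finrank F ↥(C ⊓ vanishingOff F S) + Fintype.card ι := by
  have hsum := Submodule.finrank_sup_add_finrank_inf_eq C (vanishingOff F S)
  have hsup := (C ⊔ vanishingOff F S).finrank_le
  rw [finrank_vanishingOff, finrank_fintype_fun_eq_card] at *
  omega

variable [DecidableEq F]

theorem mem_vanishingOff {S : Finset ι} {c : ι → F} :
    c ∈ vanishingOff F S ↔ hammingSupport c ⊆ S := by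
  simp only [vanishingOff, LinearMap.mem_ker, funext_iff, LinearMap.funLeft_apply,
    Pi.zero_apply, Subtype.forall, subset_iff, mem_hammingSupport]
  exact forall_congr' fun i => by tauto

theorem hammingNorm_le_card_of_mem_vanishingOff {S : Finset ι} {c : ι → F}
    (hc : c ∈ vanishingOff F S) : hammingNorm c ≤ #S :=
  card_le_card (mem_vanishingOff.1 hc)

theorem hammingSupport_eq_of_mem_vanishingOff {S : Finset ι} {c : ι → F}
    (hc : c ∈ vanishingOff F S) (hS : #S ≤ hammingNorm c) : hammingSupport c = S :=
  eq_of_subset_of_card_le (mem_vanishingOff.1 hc) hS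

/-- Evaluation at a point of `S` is injective on the codewords supported in `S`. -/
theorem finrank_inf_vanishingOff_le_one {C : Submodule F (ι → F)} {S : Finset ι}
    (hS : S.Nonempty) (hlow : ∀ c ∈ C, c ≠ 0 → #S ≤ hammingNorm c) :
    finrank F ↥(C ⊓ vanishingOff F S) ≤ 1 := by
  obtain ⟨i₀, hi₀⟩ := hS
  let evalAt : ↥(C ⊓ vanishingOff F S) →ₗ[F] F :=
    (LinearMap.proj i₀).comp (Submodule.subtype _)
  have hinj : Function.Injective evalAt := by
    refine (injective_iff_map_eq_zero evalAt).2 fun c hc0 => Subtype.ext ?_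
    obtain ⟨c, hcC, hcS⟩ := c
    have hcErase : c ∈ vanishingOff F (S.erase i₀) := mem_vanishingOff.2 fun i hi =>
      mem_erase.2 ⟨fun h => mem_hammingSupport.1 hi (h ▸ hc0), mem_vanishingOff.1 hcS hi⟩
    by_contra hne
    have hlong := hlow c hcC hne
    have hshort := hammingNorm_le_card_of_mem_vanishingOff hcErase
    have hlt := card_erase_lt_of_mem hi₀
    omega
  simpa using LinearMap.finrank_le_finrank_of_injective hinj

end CoordinateSubspace

theorem card_filter_mem_submodule {K M : Type*} [Field K] [Fintype K] [AddCommGroup M]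
    [Module K M] [Fintype M] (V : Submodule K M) [DecidablePred (· ∈ V)] :
    #{x | x ∈ V} = Fintype.card K ^ finrank K V := by
  rw [← Fintype.card_subtype]
  exact Module.card_eq_pow_finrank

section Counting

variable {ι F : Type*} [Fintype ι] [DecidableEq ι] [Field F] [Fintype F] [DecidableEq F]

theorem card_filter_hammingSupport_eq {C : Submodule F (ι → F)} [DecidablePred (· ∈ C)]
    {S : Finset ι} (hS : S.Nonempty) (hlow : ∀ c ∈ C, c ≠ 0 → #S ≤ hammingNorm c)
    (hrank : finrank F ↥(C ⊓ vanishingOff F S) = 1) :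
    #{c | c ∈ C ∧ hammingSupport c = S} = Fintype.card F - 1 := by
  classical
  have hfilter : ({c | c ∈ C ∧ hammingSupport c = S} : Finset (ι → F)) =
      ({c | c ∈ C ⊓ vanishingOff F S} : Finset (ι → F)).erase 0 := by
    ext c
    simp only [mem_erase, mem_filter, mem_univ, true_and, Submodule.mem_inf]
    constructor
    · rintro ⟨hcC, rfl⟩
      refine ⟨?_, hcC, mem_vanishingOff.2 subset_rfl⟩
      rintro rfl
      simp [hammingSupport] at hS
    · rintro ⟨hc0, hcC, hcS⟩
      exact ⟨hcC, hammingSupport_eq_of_mem_vanishingOff hcS (hlow c hcC hc0)⟩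
  rw [hfilter, card_erase_of_mem (by simp), card_filter_mem_submodule, hrank, pow_one]

end Counting

section LinearCode

variable {N : ℕ} {F : Type*} [Field F] [Fintype F] [DecidableEq F]

theorem minDist_le_hammingNorm {C : Submodule F (Fin N → F)} {c : Fin N → F} (hc : c ∈ C)
    (hc0 : c ≠ 0) : minDist C ≤ hammingNorm c :=
  Nat.sInf_le ⟨c, hc, hc0, rfl⟩

theorem weightCount_eq_sum_card_filter_hammingSupport_eq (C : Submodule F (Fin N → F))
    [DecidablePred (· ∈ C)] (w : ℕ) :
    weightCount C w = ∑ S ∈ powersetCard w univ, #{c | c ∈ C ∧ hammingSupport c = S} := by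
  have hset : {c : Fin N → F | c ∈ C ∧ hammingNorm c = w} =
      ↑({c | c ∈ C ∧ hammingNorm c = w} : Finset (Fin N → F)) := by
    simp
  rw [weightCount, hset, Set.ncard_coe_finset,
    card_eq_sum_card_fiberwise (f := hammingSupport) (t := powersetCard w univ)
      fun c hc => mem_powersetCard_univ.2 (mem_filter.1 hc).2.2]
  refine sum_congr rfl fun S hS => ?_
  obtain rfl := mem_powersetCard_univ.1 hS
  rw [filter_filter]
  refine congrArg card (filter_congr fun c _ => ?_)
  rw [hammingNorm_eq_card_hammingSupport]
  exact ⟨fun h => ⟨h.1.1, h.2⟩, fun ⟨hcC, hcS⟩ => ⟨⟨hcC, hcS ▸ rfl⟩, hcS⟩⟩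

end LinearCode

/-- an MDS code of dimension `K ≥ 1` and minimum distance `D = N + 1 - K`
has exactly `binomial(N, K-1) · (q - 1)` codewords of minimum weight. -/
theorem stmt_3 {N : ℕ} {F : Type*} [Field F] [Fintype F] [DecidableEq F]
    (C : Submodule F (Fin N → F)) (K D : ℕ)
    (hK : Module.finrank F C = K) (hK1 : 1 ≤ K)
    (hD : minDist C = D) (hMDS : K + D = N + 1) :
    weightCount C D = Nat.choose N (K - 1) * (Fintype.card F - 1) := by
  classical
  have hKN : K ≤ N := by
    simpa [hK] using C.finrank_le
  have hlow : ∀ c ∈ C, c ≠ 0 → D ≤ hammingNorm c := hD ▸ fun c => minDist_le_hammingNorm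
  have hfiber : ∀ S ∈ powersetCard D univ,
      #{c | c ∈ C ∧ hammingSupport c = S} = Fintype.card F - 1 := by
    intro S hS
    obtain rfl := mem_powersetCard_univ.1 hS
    have hSne : S.Nonempty := card_pos.1 (by omega)
    have hupper := finrank_inf_vanishingOff_le_one hSne hlow
    have hlower := finrank_add_card_le_finrank_inf_vanishingOff C S
    rw [hK, Fintype.card_fin] at hlower
    exact card_filter_hammingSupport_eq hSne hlow (by omega)
  rw [weightCount_eq_sum_card_filter_hammingSupport_eq, sum_congr rfl hfiber, sum_const,
    card_powersetCard, card_univ, Fintype.card_fin, smul_eq_mul,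
    show D = N - (K - 1) by omega, Nat.choose_symm (by omega)]
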